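/- The function u(y) = π/2 − arctan(e^{−y}) satisfies the ODE −u''(y) + (1/4) sin(4u(y)) = 0 for all y ∈ ℝ, together with u(0) = π/4, u(y) → 0 as y → −∞, and u(y) → π/2 as y → +∞. -/

import Mathlib

/-! The kink `u` solves the first-order (Bogomolny) equation `u' = sin (2u) / 2`, because with
`t = exp (-y)` both sides equal `t / (1 + t²)`. Differentiating once more along this autonomous
equation gives `u'' = cos (2u) · sin (2u) / 2 = sin (4u) / 4`. -/

open Real Filter

noncomputable def uDW (y : ℝ) : ℝ := Real.pi/2 - Real.arctan (Real.exp (-y))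

theorem hasDerivAt_deriv_of_autonomous_ode {𝕜 : Type*} [NontriviallyNormedField 𝕜]
    {f g g' : 𝕜 → 𝕜} (hf : ∀ y, HasDerivAt f (g (f y)) y) (hg : ∀ x, HasDerivAt g (g' x) x)
    (y : 𝕜) : HasDerivAt (deriv f) (g' (f y) * g (f y)) y := by
  rw [show deriv f = g ∘ f from funext fun y => (hf y).deriv]
  exact (hg (f y)).comp y (hf y)

theorem Real.sin_two_mul_arctan (x : ℝ) : sin (2 * arctan x) = 2 * x / (1 + x ^ 2) := by
  have hs : √(1 + x ^ 2) ^ 2 = 1 + x ^ 2 := sq_sqrt (by positivity)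
  rw [sin_two_mul, sin_arctan, cos_arctan]
  field_simp
  rw [hs]

theorem hasDerivAt_half_sin_two_mul (x : ℝ) :
    HasDerivAt (fun x => sin (2 * x) / 2) (cos (2 * x)) x :=
  ((((hasDerivAt_id x).const_mul 2).sin).div_const 2).congr_deriv (by simp)

theorem sin_two_mul_uDW (y : ℝ) : sin (2 * uDW y) = 2 * exp (-y) / (1 + exp (-y) ^ 2) := by
  rw [uDW, mul_sub, mul_div_cancel₀ _ two_ne_zero, sin_pi_sub, sin_two_mul_arctan]

theorem hasDerivAt_uDW (y : ℝ) : HasDerivAt uDW (sin (2 * uDW y) / 2) y := by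
  refine (((hasDerivAt_neg y).exp.arctan).const_sub (π / 2)).congr_deriv ?_
  rw [sin_two_mul_uDW]
  field_simp

theorem deriv_deriv_uDW (y : ℝ) : deriv (deriv uDW) y = sin (4 * uDW y) / 4 := by
  rw [(hasDerivAt_deriv_of_autonomous_ode hasDerivAt_uDW hasDerivAt_half_sin_two_mul y).deriv,
    show 4 * uDW y = 2 * (2 * uDW y) by ring, sin_two_mul (2 * uDW y)]
  ring

theorem uDW_zero : uDW 0 = π / 4 := by
  rw [uDW, neg_zero, exp_zero, arctan_one]
  ring

theorem tendsto_uDW_atBot : Tendsto uDW atBot (nhds 0) := by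
  have h := (tendsto_arctan_atTop.mono_right nhdsWithin_le_nhds).comp
    (tendsto_exp_atTop.comp tendsto_neg_atBot_atTop) |>.const_sub (π / 2)
  rwa [sub_self] at h

theorem tendsto_uDW_atTop : Tendsto uDW atTop (nhds (π / 2)) := by
  have h := (continuous_arctan.tendsto 0).comp
    (tendsto_exp_atBot.comp tendsto_neg_atTop_atBot) |>.const_sub (π / 2)
  rwa [arctan_zero, sub_zero] at h

theorem stmt_2 :
    (∀ y : ℝ, -(deriv (deriv uDW) y) + (1/4) * Real.sin (4 * uDW y) = 0) ∧
    uDW 0 = Real.pi/4 ∧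
    Tendsto uDW atBot (nhds 0) ∧
    Tendsto uDW atTop (nhds (Real.pi/2)) := by
  refine ⟨fun y => ?_, uDW_zero, tendsto_uDW_atBot, tendsto_uDW_atTop⟩
  rw [deriv_deriv_uDW]
  ring
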